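/- Fix q with 0 < q < 1 and let f₁, f_q ∈ L¹([0,2π); ℂ). Then the following are equivalent: (a) for every n ∈ ℤ, both ∫₀^{2π} f₁(t) e^{int} dt + qⁿ ∫₀^{2π} f_q(t) e^{int} dt = 0 and ∫₀^{2π} f₁(t) e^{-int} dt + qⁿ ∫₀^{2π} f_q(t) e^{-int} dt = 0; (b) there exists c ∈ ℂ such that f₁(t) = c·log(q^{-1/2}) for almost every t and f_q(t) = c·log(q^{1/2}) for almost every t. (This says: a measure on the boundary B = B₁ ∪ B_q of the annulus 𝔸 = {q < |z| < 1}, absolutely continuous with L¹ density with respect to arclength, annihilates A(𝔸) ⊕ A(𝔸)* if and only if its density equals c·log|z q^{-1/2}|.) -/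

import Mathlib

/-!
Write `aₙ = ∫ f₁ eⁱⁿᵗ` and `bₙ = ∫ f_q eⁱⁿᵗ`. The two families of conditions read
`aₙ + qⁿ bₙ = 0` and `aₙ + q⁻ⁿ bₙ = 0`; since `qⁿ ≠ q⁻ⁿ` for `n ≠ 0`, they say exactly that
all nonzero Fourier coefficients of `f₁` and `f_q` vanish and that `a₀ + b₀ = 0`.
An `L¹` function on the circle is determined by its Fourier coefficients: it pairs to zero
with every trigonometric polynomial, hence (by density) with every continuous function on the
circle, hence with every test function supported in `(0, 2π)`. So `f₁` and `f_q` are a.e.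
constants with opposite sum, i.e. proportional to the values `±log q^{-1/2}` of
`log |z q^{-1/2}|` on the two boundary circles.
-/

noncomputable section

open MeasureTheory Complex

namespace AnnulusToeplitz

abbrev μI : Measure ℝ := volume.restrict (Set.Ico 0 (2 * Real.pi))

open Set Filter

local notation "𝕋" => AddCircle (2 * Real.pi)

instance : Fact (0 < 2 * Real.pi) := ⟨Real.two_pi_pos⟩

theorem fourier_coe_two_pi (n : ℤ) (t : ℝ) :
    fourier n (t : 𝕋) = exp ((((n : ℝ) * t : ℝ) : ℂ) * I) := by
  rw [fourier_coe_apply]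
  congr 1
  field_simp
  push_cast
  ring

theorem fourier_neg_coe_two_pi (n : ℤ) (t : ℝ) :
    fourier (-n) (t : 𝕋) = exp (-((((n : ℝ) * t : ℝ) : ℂ) * I)) := by
  rw [fourier_coe_two_pi]
  push_cast
  ring_nf

theorem integral_const_μI (c : ℂ) : ∫ _, c ∂μI = 2 * Real.pi * c := by
  simp [Real.two_pi_pos.le, Complex.real_smul]

theorem integral_fourier_coe_two_pi {n : ℤ} (hn : n ≠ 0) : ∫ t, fourier n (t : 𝕋) ∂μI = 0 := by
  have hc : (n : ℂ) * I ≠ 0 := mul_ne_zero (by exact_mod_cast hn) I_ne_zero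
  have hperiod : exp ((n : ℂ) * I * ((2 * Real.pi : ℝ) : ℂ)) = 1 := by
    rw [← exp_int_mul_two_pi_mul_I n]; push_cast; ring_nf
  simp_rw [fourier_coe_two_pi, show ∀ t : ℝ, (((n : ℝ) * t : ℝ) : ℂ) * I = (n : ℂ) * I * t from
    fun t => by push_cast; ring]
  rw [μI, Measure.restrict_congr_set Ico_ae_eq_Ioc, ← intervalIntegral.integral_of_le
    Real.two_pi_pos.le, integral_exp_mul_complex hc, hperiod]
  simp

theorem integral_eq_of_ae_eq_const {f : ℝ → ℂ} {c : ℂ} (h : f =ᵐ[μI] fun _ => c) :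
    ∫ t, f t ∂μI = 2 * Real.pi * c := by
  rw [integral_congr_ae h, integral_const_μI]

theorem integrable_mul_continuousMap {f : ℝ → ℂ} (hf : Integrable f μI) (Ψ : C(𝕋, ℂ)) :
    Integrable (fun t : ℝ => f t * Ψ t) μI :=
  hf.mul_bdd (Ψ.continuous.comp (AddCircle.continuous_mk' _)).aestronglyMeasurable
    (Eventually.of_forall fun _ => Ψ.norm_coe_le_norm _)

def integralMulCLM {f : ℝ → ℂ} (hf : Integrable f μI) : C(𝕋, ℂ) →L[ℂ] ℂ :=
  LinearMap.mkContinuous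
    { toFun := fun Ψ => ∫ t, f t * Ψ t ∂μI
      map_add' := fun Ψ Φ => by
        simp only [ContinuousMap.add_apply, mul_add]
        exact integral_add (integrable_mul_continuousMap hf Ψ) (integrable_mul_continuousMap hf Φ)
      map_smul' := fun c Ψ => by
        simp only [ContinuousMap.smul_apply, smul_eq_mul, RingHom.id_apply, mul_left_comm _ c]
        exact integral_const_mul c _ }
    (∫ t, ‖f t‖ ∂μI) fun Ψ => by
      calc ‖∫ t, f t * Ψ t ∂μI‖ ≤ ∫ t, ‖f t‖ * ‖Ψ‖ ∂μI :=
            norm_integral_le_of_norm_le (hf.norm.mul_const _) (Eventually.of_forall fun t => by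
              rw [norm_mul]; gcongr; exact Ψ.norm_coe_le_norm _)
        _ = (∫ t, ‖f t‖ ∂μI) * ‖Ψ‖ := integral_mul_const _ _

theorem integral_mul_continuousMap_eq_zero {f : ℝ → ℂ} (hf : Integrable f μI)
    (h : ∀ n : ℤ, ∫ t, f t * fourier n (t : 𝕋) ∂μI = 0) (Ψ : C(𝕋, ℂ)) :
    ∫ t, f t * Ψ t ∂μI = 0 := by
  have hspan : Submodule.span ℂ (range fourier) ≤ (integralMulCLM hf).ker :=
    Submodule.span_le.2 (by rintro _ ⟨n, rfl⟩; exact h n)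
  have hker := (Submodule.span ℂ (range fourier)).topologicalClosure_minimal hspan
    (integralMulCLM hf).isClosed_ker
  rw [span_fourier_closure_eq_top] at hker
  exact hker Submodule.mem_top

theorem ae_eq_zero_of_integral_mul_continuousMap_eq_zero {f : ℝ → ℂ} (hf : Integrable f μI)
    (h : ∀ Ψ : C(𝕋, ℂ), ∫ t, f t * Ψ t ∂μI = 0) : f =ᵐ[μI] 0 := by
  have hIoo : ∀ᵐ t ∂μI, t ∈ Ioo 0 (2 * Real.pi) := by
    rw [μI, Measure.restrict_congr_set Ioo_ae_eq_Ico.symm]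
    exact ae_restrict_mem measurableSet_Ioo
  have hzero : ∀ᵐ t ∂μI, t ∈ Ioo 0 (2 * Real.pi) → f t = 0 := by
    refine isOpen_Ioo.ae_eq_zero_of_integral_contDiff_smul_eq_zero
      (hf.locallyIntegrable.locallyIntegrableOn _) fun φ hφ _ hsupp => ?_
    -- a test function supported in `(0, 2π)` descends to a continuous function on the circle
    have hφ0 : ∀ x ∉ Ioo 0 (2 * Real.pi), φ x = 0 := fun x hx =>
      image_eq_zero_of_notMem_tsupport fun hmem => hx (hsupp hmem)
    let Ψ : C(𝕋, ℂ) := ⟨AddCircle.liftIco (2 * Real.pi) 0 (fun t => (φ t : ℂ)),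
      AddCircle.liftIco_continuous (by simp [hφ0])
        (continuous_ofReal.comp hφ.continuous).continuousOn⟩
    calc ∫ t, φ t • f t ∂μI = ∫ t, f t * Ψ t ∂μI := integral_congr_ae <| by
          filter_upwards [ae_restrict_mem measurableSet_Ico] with t ht
          rw [real_smul, mul_comm]
          congr 1
          exact (AddCircle.liftIco_coe_apply (f := fun t => (φ t : ℂ))
            (show t ∈ Ico 0 (0 + 2 * Real.pi) by rwa [zero_add])).symm
      _ = 0 := h Ψ
  filter_upwards [hzero, hIoo] with t h1 h2 using h1 h2

theorem ae_eq_zero_of_integral_mul_fourier_eq_zero {f : ℝ → ℂ} (hf : Integrable f μI)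
    (h : ∀ n : ℤ, ∫ t, f t * fourier n (t : 𝕋) ∂μI = 0) : f =ᵐ[μI] 0 :=
  ae_eq_zero_of_integral_mul_continuousMap_eq_zero hf (integral_mul_continuousMap_eq_zero hf h)

theorem exists_ae_eq_const_iff_integral_mul_fourier_eq_zero {f : ℝ → ℂ} (hf : Integrable f μI) :
    (∃ c : ℂ, f =ᵐ[μI] fun _ => c) ↔ ∀ n ≠ 0, ∫ t, f t * fourier n (t : 𝕋) ∂μI = 0 := by
  have hmoment : ∀ (c : ℂ) (n : ℤ), ∫ t, (f t - c) * fourier n (t : 𝕋) ∂μI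
      = ∫ t, f t * fourier n (t : 𝕋) ∂μI - c * ∫ t, fourier n (t : 𝕋) ∂μI := fun c n => by
    simp only [sub_mul]
    rw [integral_sub (integrable_mul_continuousMap hf _)
      (integrable_mul_continuousMap (integrable_const c) _), integral_const_mul]
  constructor
  · rintro ⟨c, hc⟩ n hn
    calc ∫ t, f t * fourier n (t : 𝕋) ∂μI = ∫ t, c * fourier n (t : 𝕋) ∂μI :=
          integral_congr_ae (hc.mono fun t ht => by simp only [ht])
      _ = 0 := by rw [integral_const_mul, integral_fourier_coe_two_pi hn, mul_zero]
  · intro h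
    set c : ℂ := (∫ t, f t ∂μI) / (2 * Real.pi)
    suffices ∀ n : ℤ, ∫ t, (f t - c) * fourier n (t : 𝕋) ∂μI = 0 from
      ⟨c, (ae_eq_zero_of_integral_mul_fourier_eq_zero (hf.sub (integrable_const c)) this).mono
        fun t ht => sub_eq_zero.1 ht⟩
    intro n
    rw [hmoment]
    rcases eq_or_ne n 0 with rfl | hn
    · have hpi : (2 * Real.pi : ℂ) ≠ 0 := by exact_mod_cast Real.two_pi_pos.ne'
      simp only [fourier_zero, mul_one, integral_const_μI, c]
      field_simp
      ring
    · rw [h n hn, integral_fourier_coe_two_pi hn, mul_zero, sub_zero]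

theorem forall_add_zpow_mul_eq_zero_iff {K : Type*} [Field K] {q : K}
    (hq : Function.Injective fun n : ℤ => q ^ n) (a b : ℤ → K) :
    (∀ n : ℤ, a n + q ^ n * b n = 0 ∧ a (-n) + q ^ n * b (-n) = 0) ↔
      (∀ n ≠ 0, a n = 0) ∧ (∀ n ≠ 0, b n = 0) ∧ a 0 + b 0 = 0 := by
  constructor
  · intro h
    have hb : ∀ n ≠ 0, b n = 0 := fun n hn => by
      have hq' : q ^ n - q ^ (-n) ≠ 0 := sub_ne_zero.2 fun he => hn (by linarith [hq he])
      have hneg := (h (-n)).2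
      rw [neg_neg] at hneg
      exact (mul_eq_zero.1 (by linear_combination (h n).1 - hneg)).resolve_left hq'
    refine ⟨fun n hn => ?_, hb, by simpa using (h 0).1⟩
    simpa [hb n hn] using (h n).1
  · rintro ⟨ha, hb, h0⟩ n
    rcases eq_or_ne n 0 with rfl | hn
    · simpa using h0
    · simp [ha n hn, hb n hn, ha (-n) (neg_ne_zero.2 hn), hb (-n) (neg_ne_zero.2 hn)]

/-- an `L¹` density `(f₁, f_q)` on the two boundary circles of the annulus
`{q < |z| < 1}` annihilates `A(𝔸) ⊕ A(𝔸)*` (equivalently, the displayed moment conditions hold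
for all `n ∈ ℤ`) iff `f₁ = c·log(q^{-1/2})` and `f_q = c·log(q^{1/2})` a.e. for some `c ∈ ℂ`. -/
theorem annulus_annihilator_iff (q : ℝ) (hq0 : 0 < q) (hq1 : q < 1)
    (f1 fq : ℝ → ℂ) (hf1 : Integrable f1 μI) (hfq : Integrable fq μI) :
    (∀ n : ℤ,
      (∫ t, f1 t * Complex.exp ((((n : ℝ) * t : ℝ) : ℂ) * Complex.I) ∂μI)
        + (q : ℂ) ^ n * ∫ t, fq t * Complex.exp ((((n : ℝ) * t : ℝ) : ℂ) * Complex.I) ∂μI = 0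
      ∧
      (∫ t, f1 t * Complex.exp (-((((n : ℝ) * t : ℝ) : ℂ) * Complex.I)) ∂μI)
        + (q : ℂ) ^ n * ∫ t, fq t * Complex.exp (-((((n : ℝ) * t : ℝ) : ℂ) * Complex.I)) ∂μI
        = 0)
    ↔ ∃ c : ℂ,
      (∀ᵐ t ∂μI, f1 t = c * ((Real.log (q ^ (-(1 : ℝ) / 2)) : ℝ) : ℂ)) ∧
      (∀ᵐ t ∂μI, fq t = c * ((Real.log (q ^ ((1 : ℝ) / 2)) : ℝ) : ℂ)) := by
  have hlog : ∀ y : ℝ, Real.log (q ^ y) = y * Real.log q := Real.log_rpow hq0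
  have hL' : Real.log (q ^ ((1 : ℝ) / 2)) = -Real.log (q ^ (-(1 : ℝ) / 2)) := by
    rw [hlog, hlog]; ring
  have hL0 : ((Real.log (q ^ (-(1 : ℝ) / 2)) : ℝ) : ℂ) ≠ 0 := ofReal_ne_zero.2 <| by
    rw [hlog]; exact mul_ne_zero (by norm_num) (Real.log_neg hq0 hq1).ne
  have hq : Function.Injective fun n : ℤ => (q : ℂ) ^ n := fun m n h =>
    zpow_right_injective₀ hq0 hq1.ne (ofReal_injective (by simpa using h))
  simp only [← fourier_coe_two_pi, ← fourier_neg_coe_two_pi]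
  rw [forall_add_zpow_mul_eq_zero_iff hq (fun n => ∫ t, f1 t * fourier n (t : 𝕋) ∂μI)
    (fun n => ∫ t, fq t * fourier n (t : 𝕋) ∂μI)]
  simp only [← exists_ae_eq_const_iff_integral_mul_fourier_eq_zero hf1,
    ← exists_ae_eq_const_iff_integral_mul_fourier_eq_zero hfq, fourier_zero, mul_one, hL']
  constructor
  · rintro ⟨⟨c1, h1⟩, ⟨cq, h2⟩, hsum⟩
    rw [integral_eq_of_ae_eq_const h1, integral_eq_of_ae_eq_const h2, ← mul_add,
      mul_eq_zero] at hsum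
    have hcq : cq = -c1 := by
      linear_combination hsum.resolve_left (by exact_mod_cast Real.two_pi_pos.ne')
    refine ⟨c1 / Real.log (q ^ (-(1 : ℝ) / 2)), h1.mono fun t ht => ?_, h2.mono fun t ht => ?_⟩
    · rw [ht, div_mul_cancel₀ _ hL0]
    · rw [ht, hcq]; push_cast; rw [mul_neg, div_mul_cancel₀ _ hL0]
  · rintro ⟨c, h1, h2⟩
    refine ⟨⟨_, h1⟩, ⟨_, h2⟩, ?_⟩
    rw [integral_eq_of_ae_eq_const h1, integral_eq_of_ae_eq_const h2]
    push_cast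
    ring

end AnnulusToeplitz
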